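/- arXiv:1909.09807 — 3 statements merged into one kernel-verified Lean document; each statement's English description precedes it below -/
import Mathlib

section
/- Termination (Section 5.1): the step relation on repair states induced by applying matching rectifying rules is well-founded in the repairing direction, i.e., there is no infinite sequence of repair states (t₀, VA₀) → (t₁, VA₁) → … in which every arrow is a rule application step; hence every repairing process on every tuple ends. -/
/-- A matching rectifying rule over attributes `A` and values `V`. -/
structure MRRule (A V : Type) [DecidableEq A] [DecidableEq V] where
  /-- the evidence attributes -/
  X : Finset A
  /-- the director pattern -/
  DP : A → V
  /-- the target attribute -/
  y : A
  hy : y ∉ X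
  /-- the wrong patterns -/
  WP : Finset V
  /-- the correct pattern -/
  cp : V
  hcp : cp ∉ WP

variable {A V : Type} [Fintype A] [DecidableEq A] [DecidableEq V]

/-- Exact matching of a tuple against a rule. -/
def MRRule.Matches (r : MRRule A V) (t : A → V) : Prop :=
  (∀ a ∈ r.X, t a = r.DP a) ∧ t r.y ∈ insert r.cp r.WP

/-- Applying a rule to a tuple. -/
def MRRule.apply (r : MRRule A V) (t : A → V) : A → V :=
  fun b => if b = r.y then r.cp else if b ∈ r.X then r.DP b else t b

/-- A rule application step between repair states. -/
def RuleStep (s s' : (A → V) × Finset A) : Prop :=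
  ∃ r : MRRule A V, r.Matches s.1 ∧ (r.y ∉ s.2 ∨ ¬ r.X ⊆ s.2) ∧
    s' = (r.apply s.1, s.2 ∪ r.X ∪ {r.y})

omit [Fintype A] in
theorem RuleStep.verified_ssubset {s s' : (A → V) × Finset A} (h : RuleStep s s') :
    s.2 ⊂ s'.2 := by
  obtain ⟨r, -, hfresh, rfl⟩ := h
  have hnew : ¬ r.X ∪ {r.y} ⊆ s.2 := by
    rw [Finset.union_subset_iff, Finset.singleton_subset_iff]
    tauto
  rw [Finset.union_assoc]
  exact left_lt_sup.2 hnew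

theorem wellFounded_ruleStep_flip :
    WellFounded (fun s' s : (A → V) × Finset A => RuleStep s s') :=
  Subrelation.wf RuleStep.verified_ssubset (InvImage.wf Prod.snd wellFounded_gt)

/-- the step relation is well-founded in the repairing
direction, i.e., there is no infinite sequence of repair states in which
every arrow is a rule application step. -/
theorem repair_terminates :
    WellFounded (fun s' s : (A → V) × Finset A => RuleStep s s') ∧
    ¬ ∃ s : ℕ → (A → V) × Finset A, ∀ i, RuleStep (s i) (s (i + 1)) := by
  refine ⟨wellFounded_ruleStep_flip, fun ⟨s, hs⟩ => ?_⟩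
  have : IsWellFounded _ _ := ⟨wellFounded_ruleStep_flip (A := A) (V := V)⟩
  obtain ⟨n, hn⟩ := WellFounded.not_rel_apply_succ (r := fun s' s => RuleStep s s') s
  exact hn (hs n)
end

section
/- Necessity of consistency check, same-target case (condition 1 of Algorithm Inconsis-Res): let r_i, r_j be matching rectifying rules with y(r_i) = y(r_j) = y, disjoint evidence attribute sets X(r_i) ∩ X(r_j) = ∅, distinct correct patterns cp(r_i) ≠ cp(r_j) with cp(r_i) ∉ WP(r_j) and cp(r_j) ∉ WP(r_i), and a shared wrong pattern v ∈ WP(r_i) ∩ WP(r_j). Then there exists a tuple t that matches both r_i and r_j such that apply(r_i, t) does not match r_j, apply(r_j, t) does not match r_i, and apply(r_i, t)(y) = cp(r_i) ≠ cp(r_j) = apply(r_j, t)(y); hence the final repair of t depends on the order of application, so r_i and r_j are inconsistent. -/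
variable {A V : Type} [Fintype A] [DecidableEq A] [DecidableEq V]

namespace MRRule

omit [Fintype A]

theorem apply_target (r : MRRule A V) (t : A → V) : r.apply t r.y = r.cp := by
  simp [apply]

theorem matches_of_mem_WP {r : MRRule A V} {t : A → V} (hX : ∀ a ∈ r.X, t a = r.DP a)
    (hy : t r.y ∈ r.WP) : r.Matches t :=
  ⟨hX, Finset.mem_insert_of_mem hy⟩

theorem not_matches_apply {r s : MRRule A V} (hy : s.y = r.y) (hcp : r.cp ≠ s.cp)
    (hWP : r.cp ∉ s.WP) (t : A → V) : ¬ s.Matches (r.apply t) := by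
  rintro ⟨-, hmem⟩
  rw [hy, apply_target] at hmem
  rcases Finset.mem_insert.mp hmem with h | h
  · exact hcp h
  · exact hWP h

def joinPattern (r s : MRRule A V) (v : V) : A → V :=
  fun a => if a ∈ r.X then r.DP a else if a ∈ s.X then s.DP a else v

theorem joinPattern_of_mem_left {r s : MRRule A V} {v : V} {a : A} (ha : a ∈ r.X) :
    joinPattern r s v a = r.DP a := by
  simp [joinPattern, ha]

theorem joinPattern_of_mem_right {r s : MRRule A V} {v : V} {a : A} (hX : Disjoint r.X s.X)
    (ha : a ∈ s.X) : joinPattern r s v a = s.DP a := by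
  simp [joinPattern, ha, Finset.disjoint_right.mp hX ha]

theorem joinPattern_of_not_mem {r s : MRRule A V} {v : V} {a : A} (hr : a ∉ r.X)
    (hs : a ∉ s.X) : joinPattern r s v a = v := by
  simp [joinPattern, hr, hs]

end MRRule

open MRRule in
/-- necessity of the consistency check, same-target case:
two rules with the same target `y`, disjoint evidence attribute sets,
distinct correct patterns not occurring in each other's wrong patterns, and
a shared wrong pattern, are inconsistent: some tuple matching both rules is
rectified differently depending on the order of application. -/
theorem same_target_rules_inconsistent (ri rj : MRRule A V)
    (y : A) (hyi : ri.y = y) (hyj : rj.y = y)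
    (hX : ri.X ∩ rj.X = ∅)
    (hcp : ri.cp ≠ rj.cp)
    (hij : ri.cp ∉ rj.WP) (hji : rj.cp ∉ ri.WP)
    (v : V) (hv : v ∈ ri.WP ∩ rj.WP) :
    ∃ t : A → V, ri.Matches t ∧ rj.Matches t ∧
      ¬ rj.Matches (ri.apply t) ∧ ¬ ri.Matches (rj.apply t) ∧
      ri.apply t y = ri.cp ∧ rj.apply t y = rj.cp ∧
      ri.apply t y ≠ rj.apply t y := by
  subst hyi
  obtain ⟨hvi, hvj⟩ := Finset.mem_inter.mp hv
  have hdisj : Disjoint ri.X rj.X := Finset.disjoint_iff_inter_eq_empty.mpr hX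
  have hty : joinPattern ri rj v ri.y = v :=
    joinPattern_of_not_mem ri.hy (hyj ▸ rj.hy)
  refine ⟨joinPattern ri rj v,
    matches_of_mem_WP (fun _ => joinPattern_of_mem_left) (by rwa [hty]),
    matches_of_mem_WP (fun _ => joinPattern_of_mem_right hdisj) (by rwa [hyj, hty]),
    not_matches_apply hyj hcp hij _, not_matches_apply hyj.symm hcp.symm hji _,
    apply_target _ _, hyj ▸ apply_target _ _, ?_⟩
  rw [apply_target, ← hyj, apply_target]
  exact hcp
end

section
/- Sufficiency of consistency check, mutual target-in-evidence case (condition 4 of Algorithm Inconsis-Res): let r_i, r_j be matching rectifying rules with distinct targets y(r_i) ≠ y(r_j), such that y(r_j) ∈ X(r_i), y(r_i) ∈ X(r_j), the director patterns agree on the common evidence attributes (DP(r_i)(a) = DP(r_j)(a) for all a ∈ X(r_i) ∩ X(r_j)), DP(r_i)(y(r_j)) = cp(r_j), and DP(r_j)(y(r_i)) = cp(r_i). Then for every tuple t matching both rules, apply(r_i, t) matches r_j, apply(r_j, t) matches r_i, and apply(r_j, apply(r_i, t)) = apply(r_i, apply(r_j, t)); hence r_i and r_j are consistent. -/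
variable {A V : Type} [Fintype A] [DecidableEq A] [DecidableEq V]

namespace MRRule

theorem apply_eq_update {A V : Type} [DecidableEq A] [DecidableEq V] {r : MRRule A V}
    {t : A → V} (ht : ∀ a ∈ r.X, t a = r.DP a) :
    r.apply t = Function.update t r.y r.cp := by
  funext b
  by_cases hb : b = r.y
  · subst hb
    simp [apply]
  · by_cases hX : b ∈ r.X <;> simp [apply, hb, hX, ht]

theorem Matches.update_of_ne {A V : Type} [DecidableEq A] [DecidableEq V] {r : MRRule A V}
    {t : A → V} (ht : r.Matches t) {b : A} (hb : b ≠ r.y) {v : V}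
    (hv : b ∈ r.X → r.DP b = v) :
    r.Matches (Function.update t b v) := by
  refine ⟨fun a ha => ?_, by rw [Function.update_of_ne hb.symm]; exact ht.2⟩
  rcases eq_or_ne a b with rfl | hab
  · rw [Function.update_self, hv ha]
  · rw [Function.update_of_ne hab, ht.1 a ha]

end MRRule

theorem mutual_target_in_evidence_rules_consistent_general (ri rj : MRRule A V)
    (hyy : ri.y ≠ rj.y)
    (hdi : ri.DP rj.y = rj.cp) (hdj : rj.DP ri.y = ri.cp) :
    ∀ t : A → V, ri.Matches t → rj.Matches t →
      rj.Matches (ri.apply t) ∧ ri.Matches (rj.apply t) ∧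
      rj.apply (ri.apply t) = ri.apply (rj.apply t) := by
  intro t hi hj
  rw [MRRule.apply_eq_update hi.1, MRRule.apply_eq_update hj.1]
  have hj' : rj.Matches (Function.update t ri.y ri.cp) := hj.update_of_ne hyy fun _ => hdj
  have hi' : ri.Matches (Function.update t rj.y rj.cp) := hi.update_of_ne hyy.symm fun _ => hdi
  refine ⟨hj', hi', ?_⟩
  rw [MRRule.apply_eq_update hj'.1, MRRule.apply_eq_update hi'.1]
  exact Function.update_comm hyy _ _ _

/-- sufficiency of the consistency check, mutual
target-in-evidence case: two rules with distinct targets such that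
`y(r_j) ∈ X(r_i)`, `y(r_i) ∈ X(r_j)`, director patterns agreeing on common
evidence attributes, `DP(r_i)(y(r_j)) = cp(r_j)` and
`DP(r_j)(y(r_i)) = cp(r_i)`, are consistent. -/
theorem mutual_target_in_evidence_rules_consistent (ri rj : MRRule A V)
    (hyy : ri.y ≠ rj.y)
    (hji : rj.y ∈ ri.X) (hij : ri.y ∈ rj.X)
    (hdp : ∀ a ∈ ri.X ∩ rj.X, ri.DP a = rj.DP a)
    (hdi : ri.DP rj.y = rj.cp) (hdj : rj.DP ri.y = ri.cp) :
    ∀ t : A → V, ri.Matches t → rj.Matches t →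
      rj.Matches (ri.apply t) ∧ ri.Matches (rj.apply t) ∧
      rj.apply (ri.apply t) = ri.apply (rj.apply t) :=
  mutual_target_in_evidence_rules_consistent_general ri rj hyy hdi hdj
end
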